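/- Let H₁, …, Hₙ be finite-dimensional complex Hilbert spaces and let ϱ be a density operator on H₁ ⊗ ⋯ ⊗ Hₙ. Then ϱ is separable (with respect to H₁, …, Hₙ) if and only if ‖ϱ‖_γ⁽ⁿ⁾ = 1. -/

import Mathlib

open Matrix
open scoped Kronecker ComplexOrder

noncomputable def traceNorm {n : Type*} [Fintype n] [DecidableEq n] (A : Matrix n n ℂ) : ℝ :=
  (Matrix.trace (((Matrix.posSemidef_conjTranspose_mul_self A).1.eigenvectorUnitary : Matrix n n ℂ) *
    diagonal (((↑) : ℝ → ℂ) ∘ (√·) ∘ (Matrix.posSemidef_conjTranspose_mul_self A).1.eigenvalues) *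
      (star (Matrix.posSemidef_conjTranspose_mul_self A).1.eigenvectorUnitary : Matrix n n ℂ))).re

noncomputable def gammaNorm {m n : Type*} [Fintype m] [DecidableEq m] [Fintype n] [DecidableEq n]
    (t : Matrix (m × n) (m × n) ℂ) : ℝ :=
  sInf { c : ℝ | ∃ (r : ℕ) (u : Fin r → Matrix m m ℂ) (v : Fin r → Matrix n n ℂ),
    t = ∑ i, (u i) ⊗ₖ (v i) ∧ c = ∑ i, traceNorm (u i) * traceNorm (v i) }

def IsDensity {n : Type*} [Fintype n] (ρ : Matrix n n ℂ) : Prop :=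
  ρ.PosSemidef ∧ ρ.trace = 1

def evec {ι : Type*} (ψ : EuclideanSpace ℂ ι) : ι → ℂ := ψ

noncomputable def tensorVec {ι κ : Type*} (a : EuclideanSpace ℂ ι) (b : EuclideanSpace ℂ κ) :
    EuclideanSpace ℂ (ι × κ) :=
  (WithLp.equiv 2 _).symm (fun p => evec a p.1 * evec b p.2)

noncomputable def projOnto {ι : Type*} (ψ : EuclideanSpace ℂ ι) : Matrix ι ι ℂ :=
  Matrix.vecMulVec (evec ψ) (star (evec ψ))

/-- The elementary tensor (Kronecker product) of an n-tuple of matrices. -/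
noncomputable def bigTensor {N : ℕ} {m : Fin N → Type*} [∀ k, Fintype (m k)]
    (u : ∀ k, Matrix (m k) (m k) ℂ) : Matrix (∀ k, m k) (∀ k, m k) ℂ :=
  Matrix.of fun x y => ∏ k, u k (x k) (y k)

/-- The n-fold greatest cross norm on operators on \`H₁ ⊗ ⋯ ⊗ Hₙ\`. -/
noncomputable def gammaNormN {N : ℕ} {m : Fin N → Type*}
    [∀ k, Fintype (m k)] [∀ k, DecidableEq (m k)]
    (t : Matrix (∀ k, m k) (∀ k, m k) ℂ) : ℝ :=
  sInf { c : ℝ | ∃ (r : ℕ) (u : Fin r → ∀ k, Matrix (m k) (m k) ℂ),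
    t = ∑ i, bigTensor (u i) ∧ c = ∑ i, ∏ k, traceNorm (u i k) }

/-- Separability of a density operator on an n-fold tensor product: a finite convex
combination of elementary tensors of density operators. -/
def IsSeparableN {N : ℕ} {m : Fin N → Type*} [∀ k, Fintype (m k)]
    (ϱ : Matrix (∀ k, m k) (∀ k, m k) ℂ) : Prop :=
  ∃ (r : ℕ) (ω : Fin r → ℝ) (ρ : Fin r → ∀ k, Matrix (m k) (m k) ℂ),
    (∀ i, 0 < ω i) ∧ (∑ i, ω i = 1) ∧
    (∀ i k, IsDensity (ρ i k)) ∧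
    ϱ = ∑ i, (ω i : ℂ) • bigTensor (ρ i)

/-!
Every representation `ϱ = ∑ᵢ ⨂ₖ uᵢₖ` satisfies `1 = |tr ϱ| ≤ ∑ᵢ ∏ₖ ‖uᵢₖ‖₁`, and a separable
decomposition (with the weights absorbed into one factor) attains this bound.

Conversely, singular value decompositions of the factors turn a representation of cost `c` into
`c⁻¹ • ϱ ∈ conv T`, where `T` is the set of products `⨂ₖ |aₖ⟩⟨bₖ|` with `‖aₖ‖, ‖bₖ‖ ≤ 1`. By
Carathéodory this hull is compact, so `γ(ϱ) = 1` puts `ϱ` itself in `conv T`. The trace of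
`⨂ₖ |aₖ⟩⟨bₖ|` is `∏ₖ ⟪bₖ, aₖ⟫`, a point of the closed unit disc; as `1` is an extreme point of the
disc, `tr ϱ = 1` forces equality in Cauchy–Schwarz in every term of positive weight, and those terms
are then products of pure states.
-/

open Set in
theorem IsCompact.convexHull {E : Type*} [AddCommGroup E] [Module ℝ E] [TopologicalSpace E]
    [ContinuousAdd E] [ContinuousSMul ℝ E] [FiniteDimensional ℝ E]
    {s : Set E} (hs : IsCompact s) : IsCompact (convexHull ℝ s) := by
  let combo (k : ℕ) (q : (Fin k → ℝ) × (Fin k → E)) : E := ∑ i, q.1 i • q.2 i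
  have hcombo (k : ℕ) : Continuous (combo k) := by fun_prop
  suffices _root_.convexHull ℝ s = ⋃ k ∈ Finset.range (Module.finrank ℝ E + 2),
      combo k '' (stdSimplex ℝ (Fin k) ×ˢ univ.pi fun _ => s) from
    this ▸ (Finset.range _).isCompact_biUnion fun k _ =>
      ((isCompact_stdSimplex ℝ _).prod (isCompact_univ_pi fun _ => hs)).image (hcombo k)
  refine Subset.antisymm (fun x hx => ?_) ?_
  · obtain ⟨ι, _, z, w, hzs, hz, hw₀, hw₁, rfl⟩ := eq_pos_convex_span_of_mem_convexHull hx
    have hcard : Fintype.card ι < Module.finrank ℝ E + 2 :=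
      Nat.lt_succ_of_le (hz.card_le_finrank_succ.trans (by grw [Submodule.finrank_le]))
    let e := Fintype.equivFin ι
    refine mem_biUnion (Finset.mem_range.2 hcard) ⟨(w ∘ e.symm, z ∘ e.symm), ⟨⟨?_, ?_⟩, ?_⟩, ?_⟩
    · exact fun i => (hw₀ _).le
    · exact (e.symm.sum_comp w).trans hw₁
    · exact fun i _ => hzs (mem_range_self _)
    · exact e.symm.sum_comp fun i => w i • z i
  · refine iUnion₂_subset fun k _ => ?_
    rintro - ⟨⟨w, z⟩, ⟨⟨hw₀, hw₁⟩, hz⟩, rfl⟩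
    exact mem_convexHull_of_exists_fintype w z hw₀ hw₁ (fun i => hz i (mem_univ i)) rfl

theorem norm_inner_le_one {𝕜 E : Type*} [RCLike 𝕜] [SeminormedAddCommGroup E]
    [InnerProductSpace 𝕜 E] {a b : E} (ha : ‖a‖ ≤ 1) (hb : ‖b‖ ≤ 1) : ‖inner 𝕜 a b‖ ≤ 1 :=
  (norm_inner_le_norm a b).trans (mul_le_one₀ ha (norm_nonneg b) hb)

-- `1` is an extreme point of the closed unit disc.
theorem Complex.eq_one_of_sum_mul_eq_one {ι : Type*} [Fintype ι] {w : ι → ℝ} {ζ : ι → ℂ}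
    (hw₀ : ∀ i, 0 ≤ w i) (hw₁ : ∑ i, w i = 1) (hζ : ∀ i, ‖ζ i‖ ≤ 1)
    (h : ∑ i, w i * ζ i = 1) {i : ι} (hi : w i ≠ 0) : ζ i = 1 := by
  have hre (j : ι) : w j * (ζ j).re ≤ w j :=
    mul_le_of_le_one_right (hw₀ j) ((re_le_norm _).trans (hζ j))
  have hdefect : ∑ j, (w j - w j * (ζ j).re) = 0 := by
    have := congrArg re h
    simp only [re_sum, re_ofReal_mul, one_re] at this
    rw [Finset.sum_sub_distrib, hw₁, this, sub_self]
  have hi_defect := (Finset.sum_eq_zero_iff_of_nonneg fun j _ => sub_nonneg.2 (hre j)).1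
    hdefect i (Finset.mem_univ i)
  have hre_one : (ζ i).re = 1 := by
    rw [← mul_one_sub, mul_eq_zero, sub_eq_zero] at hi_defect
    exact (hi_defect.resolve_left hi).symm
  have hnonneg : 0 ≤ ζ i := re_eq_norm.1 (le_antisymm (re_le_norm _) (hre_one ▸ hζ i))
  exact Complex.ext hre_one (nonneg_iff.1 hnonneg).2.symm

theorem Finset.sum_comp_equivFin_filter {ι M : Type*} [Fintype ι] [AddCommMonoid M]
    (p : ι → Prop) [DecidablePred p] (f : ι → M) (hf : ∀ i, ¬p i → f i = 0) :
    ∑ j, f ((univ.filter p).equivFin.symm j) = ∑ i, f i := by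
  rw [(univ.filter p).equivFin.symm.sum_comp (fun i => f i), sum_coe_sort]
  exact sum_subset (subset_univ _) fun i _ hi => hf i (by simpa using hi)

section TraceNorm

variable {n : Type*} [Fintype n] [DecidableEq n]

theorem traceNorm_eq_sum_sqrt_eigenvalues (A : Matrix n n ℂ) :
    traceNorm A = ∑ j, √((posSemidef_conjTranspose_mul_self A).1.eigenvalues j) := by
  rw [traceNorm, trace_mul_cycle, Unitary.coe_star_mul_self, one_mul, trace_diagonal]
  simp [← Complex.ofReal_sum]

open scoped MatrixOrder in
theorem traceNorm_eq_re_trace_sqrt (A : Matrix n n ℂ) :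
    traceNorm A = (CFC.sqrt (Aᴴ * A)).trace.re := by
  have hA := posSemidef_conjTranspose_mul_self A
  rw [traceNorm, CFC.sqrt_eq_cfc, cfc_nnreal_eq_real _ _ hA.nonneg, hA.1.cfc_eq]
  simp only [IsHermitian.cfc, Real.coe_sqrt, Real.coe_toNNReal', Unitary.conjStarAlgAut_apply]
  congr 5
  funext i
  simp [max_eq_left (hA.eigenvalues_nonneg i)]

open scoped MatrixOrder in
theorem traceNorm_of_posSemidef {A : Matrix n n ℂ} (hA : A.PosSemidef) :
    traceNorm A = A.trace.re := by
  rw [traceNorm_eq_re_trace_sqrt, hA.1.eq, CFC.sqrt_mul_self A hA.nonneg]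

theorem traceNorm_real_smul_of_isDensity {ρ : Matrix n n ℂ} (hρ : IsDensity ρ) {r : ℝ}
    (hr : 0 ≤ r) : traceNorm ((r : ℂ) • ρ) = r := by
  rw [traceNorm_of_posSemidef (hρ.1.smul (by exact_mod_cast hr)), trace_smul, hρ.2]
  simp

end TraceNorm

section KetBra

variable {ι : Type*}

def ketBra (a b : EuclideanSpace ℂ ι) : Matrix ι ι ℂ :=
  vecMulVec (evec a) (star (evec b))

theorem projOnto_eq_ketBra (a : EuclideanSpace ℂ ι) : projOnto a = ketBra a a := rfl

theorem ketBra_smul_left (c : ℂ) (a b : EuclideanSpace ℂ ι) :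
    ketBra (c • a) b = c • ketBra a b :=
  smul_vecMulVec c _ _

variable [Fintype ι]

theorem trace_ketBra (a b : EuclideanSpace ℂ ι) : (ketBra a b).trace = inner ℂ b a :=
  trace_vecMulVec _ _

theorem ketBra_toLp_mulVec (A : Matrix ι ι ℂ) (a b : EuclideanSpace ℂ ι) :
    ketBra (WithLp.toLp 2 (A *ᵥ a)) b = A * ketBra a b :=
  (mul_vecMulVec _ _ _).symm

theorem norm_toLp_mulVec_sq (A : Matrix ι ι ℂ) (v : EuclideanSpace ℂ ι) :
    ‖WithLp.toLp 2 (A *ᵥ v)‖ ^ 2 = RCLike.re (star v.ofLp ⬝ᵥ (Aᴴ * A) *ᵥ v.ofLp) := by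
  rw [← mulVec_mulVec, dotProduct_mulVec, ← star_mulVec, dotProduct_comm,
    ← EuclideanSpace.inner_toLp_toLp, inner_self_eq_norm_sq]

theorem isDensity_projOnto {a : EuclideanSpace ℂ ι} (ha : ‖a‖ = 1) : IsDensity (projOnto a) := by
  refine ⟨posSemidef_vecMulVec_self_star _, ?_⟩
  rw [projOnto_eq_ketBra, trace_ketBra, inner_self_eq_norm_sq_to_K, ha]
  simp

theorem ketBra_eq_inner_smul_projOnto {a b : EuclideanSpace ℂ ι} (ha : ‖a‖ ≤ 1) (hb : ‖b‖ ≤ 1)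
    (hab : ‖inner ℂ b a‖ = 1) : ‖b‖ = 1 ∧ ketBra a b = inner ℂ b a • projOnto b := by
  have hCS := norm_inner_le_norm (𝕜 := ℂ) b a
  have hb₁ : ‖b‖ = 1 := by nlinarith [norm_nonneg a, norm_nonneg b]
  have ha₁ : ‖a‖ = 1 := by nlinarith [norm_nonneg a, norm_nonneg b]
  have ha_eq : a = inner ℂ b a • b := by
    obtain hb₀ | h := ((norm_inner_eq_norm_tfae ℂ b a).out 0 1).1 (by rw [hab, ha₁, hb₁, one_mul])
    · simp [hb₀] at hb₁
    · simpa [inner_self_eq_norm_sq_to_K, hb₁] using h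
  refine ⟨hb₁, ?_⟩
  calc ketBra a b = ketBra (inner ℂ b a • b) b := congrArg (ketBra · b) ha_eq
    _ = inner ℂ b a • projOnto b := ketBra_smul_left _ _ _

variable [DecidableEq ι]

theorem sum_ketBra_eigenvectorBasis {A : Matrix ι ι ℂ} (hA : A.IsHermitian) :
    ∑ j, ketBra (hA.eigenvectorBasis j) (hA.eigenvectorBasis j) = 1 := by
  rw [← Unitary.coe_mul_star_self hA.eigenvectorUnitary]
  ext x y
  simp [ketBra, evec, Matrix.sum_apply, mul_apply, vecMulVec_apply]

-- Singular value decomposition: `vⱼ` runs through an eigenbasis of `Aᴴ * A` and `σⱼ = ‖A vⱼ‖`.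
theorem exists_sum_smul_ketBra_eq (A : Matrix ι ι ℂ) :
    ∃ (σ : ι → ℝ) (u v : ι → EuclideanSpace ℂ ι), (∀ j, 0 ≤ σ j) ∧ ∑ j, σ j = traceNorm A ∧
      (∀ j, ‖u j‖ ≤ 1) ∧ (∀ j, ‖v j‖ ≤ 1) ∧ A = ∑ j, (σ j : ℂ) • ketBra (u j) (v j) := by
  let hH := (posSemidef_conjTranspose_mul_self A).1
  let v := hH.eigenvectorBasis
  let w (j : ι) : EuclideanSpace ℂ ι := WithLp.toLp 2 (A *ᵥ v j)
  have hw_norm (j : ι) : ‖w j‖ = √(hH.eigenvalues j) := by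
    rw [hH.eigenvalues_eq, ← norm_toLp_mulVec_sq, Real.sqrt_sq (norm_nonneg _)]
  have hw_smul (j : ι) : (‖w j‖ : ℂ) • (‖w j‖⁻¹ : ℂ) • w j = w j := by
    rcases eq_or_ne ‖w j‖ 0 with h | h
    · simp [norm_eq_zero.1 h]
    · rw [smul_inv_smul₀ (by exact_mod_cast h)]
  refine ⟨fun j => ‖w j‖, fun j => (‖w j‖⁻¹ : ℂ) • w j, v, fun j => norm_nonneg _, ?_, ?_,
    fun j => (v.orthonormal.1 j).le, ?_⟩
  · simp only [hw_norm, traceNorm_eq_sum_sqrt_eigenvalues]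
  · intro j
    rw [norm_smul, norm_inv, Complex.norm_real, norm_norm]
    exact inv_mul_le_one_of_le₀ le_rfl (norm_nonneg _)
  · calc A = A * ∑ j, ketBra (v j) (v j) := by rw [sum_ketBra_eigenvectorBasis, mul_one]
      _ = ∑ j, ketBra (w j) (v j) := by simp only [Matrix.mul_sum, ketBra_toLp_mulVec, w]
      _ = _ := by simp only [← ketBra_smul_left, hw_smul]

theorem norm_trace_le_traceNorm (A : Matrix ι ι ℂ) : ‖A.trace‖ ≤ traceNorm A := by
  obtain ⟨σ, u, v, hσ, hσ_sum, hu, hv, rfl⟩ := exists_sum_smul_ketBra_eq A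
  calc ‖(∑ j, (σ j : ℂ) • ketBra (u j) (v j)).trace‖
      = ‖∑ j, (σ j : ℂ) * (ketBra (u j) (v j)).trace‖ := by simp [trace_sum, trace_smul]
    _ ≤ ∑ j, ‖(σ j : ℂ) * (ketBra (u j) (v j)).trace‖ := norm_sum_le _ _
    _ ≤ ∑ j, σ j := by
        gcongr with j
        rw [norm_mul, Complex.norm_of_nonneg (hσ j), trace_ketBra]
        exact mul_le_of_le_one_right (hσ j) (norm_inner_le_one (hv j) (hu j))
    _ = _ := hσ_sum

end KetBra

section BigTensor

variable {N : ℕ} {m : Fin N → Type*} [∀ k, Fintype (m k)]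

theorem trace_bigTensor (u : ∀ k, Matrix (m k) (m k) ℂ) :
    (bigTensor u).trace = ∏ k, (u k).trace := by
  simp only [trace, diag, bigTensor, of_apply, Fintype.prod_sum]

theorem bigTensor_smul (c : Fin N → ℂ) (u : ∀ k, Matrix (m k) (m k) ℂ) :
    bigTensor (fun k => c k • u k) = (∏ k, c k) • bigTensor u := by
  ext x y
  simp [bigTensor, Finset.prod_mul_distrib]

theorem bigTensor_sum {ι : Fin N → Type*} [∀ k, Fintype (ι k)]
    (f : ∀ k, ι k → Matrix (m k) (m k) ℂ) :
    bigTensor (fun k => ∑ j, f k j) = ∑ p : ∀ k, ι k, bigTensor (fun k => f k (p k)) := by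
  ext x y
  simp [bigTensor, Matrix.sum_apply, Fintype.prod_sum]

end BigTensor

section Decompositions

variable {N : ℕ} {m : Fin N → Type*} [∀ k, Fintype (m k)] [∀ k, DecidableEq (m k)]

def decompositionCosts (t : Matrix (∀ k, m k) (∀ k, m k) ℂ) : Set ℝ :=
  {c | ∃ (r : ℕ) (u : Fin r → ∀ k, Matrix (m k) (m k) ℂ),
    t = ∑ i, bigTensor (u i) ∧ c = ∑ i, ∏ k, traceNorm (u i k)}

theorem gammaNormN_eq_sInf_decompositionCosts (t : Matrix (∀ k, m k) (∀ k, m k) ℂ) :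
    gammaNormN t = sInf (decompositionCosts t) := rfl

theorem norm_trace_le_of_mem_decompositionCosts {t : Matrix (∀ k, m k) (∀ k, m k) ℂ} {c : ℝ}
    (hc : c ∈ decompositionCosts t) : ‖t.trace‖ ≤ c := by
  obtain ⟨r, u, rfl, rfl⟩ := hc
  calc ‖(∑ i, bigTensor (u i)).trace‖ ≤ ∑ i, ‖(bigTensor (u i)).trace‖ := by
        rw [trace_sum]
        exact norm_sum_le _ _
    _ ≤ ∑ i, ∏ k, traceNorm (u i k) := by
        gcongr with i
        rw [trace_bigTensor, norm_prod]
        gcongr with k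
        exact norm_trace_le_traceNorm _

theorem bddBelow_decompositionCosts (t : Matrix (∀ k, m k) (∀ k, m k) ℂ) :
    BddBelow (decompositionCosts t) :=
  ⟨‖t.trace‖, fun _ => norm_trace_le_of_mem_decompositionCosts⟩

theorem exists_bigTensor_eq_real_smul (k₀ : Fin N) {ρ : ∀ k, Matrix (m k) (m k) ℂ}
    (hρ : ∀ k, IsDensity (ρ k)) {r : ℝ} (hr : 0 ≤ r) :
    ∃ u : ∀ k, Matrix (m k) (m k) ℂ, bigTensor u = (r : ℂ) • bigTensor ρ ∧
      ∏ k, traceNorm (u k) = r := by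
  have hc (k : Fin N) : 0 ≤ (Pi.mulSingle k₀ r : Fin N → ℝ) k := by
    rcases eq_or_ne k k₀ with rfl | hk
    · simpa using hr
    · simp [hk]
  refine ⟨fun k => ((Pi.mulSingle k₀ r : Fin N → ℝ) k : ℂ) • ρ k, ?_, ?_⟩
  · rw [bigTensor_smul, ← Complex.ofReal_prod, Fintype.prod_pi_mulSingle']
  · simp only [traceNorm_real_smul_of_isDensity (hρ _) (hc _), Fintype.prod_pi_mulSingle']

theorem one_mem_decompositionCosts_of_isSeparableN {ϱ : Matrix (∀ k, m k) (∀ k, m k) ℂ}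
    (h : IsSeparableN ϱ) : 1 ∈ decompositionCosts ϱ := by
  obtain ⟨r, ω, ρ, hω₀, hω₁, hρ, rfl⟩ := h
  rcases isEmpty_or_nonempty (Fin N) with hN | ⟨⟨k₀⟩⟩
  -- for `N = 0` there is no factor to absorb the weights, but all elementary tensors coincide
  · refine ⟨1, fun _ k => isEmptyElim k, ?_, by simp⟩
    simp only [Subsingleton.elim (ρ _) (fun k => isEmptyElim k), ← Finset.sum_smul,
      ← Complex.ofReal_sum, hω₁]
    simp
  · choose u hu hu_cost using fun i => exists_bigTensor_eq_real_smul k₀ (hρ i) (hω₀ i).le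
    exact ⟨r, u, by simp only [hu], by simp only [hu_cost, hω₁]⟩

theorem gammaNormN_eq_one_of_isSeparableN {ϱ : Matrix (∀ k, m k) (∀ k, m k) ℂ}
    (htr : ϱ.trace = 1) (h : IsSeparableN ϱ) : gammaNormN ϱ = 1 := by
  refine IsLeast.csInf_eq ⟨one_mem_decompositionCosts_of_isSeparableN h, fun c hc => ?_⟩
  simpa [htr] using norm_trace_le_of_mem_decompositionCosts hc

end Decompositions

section ConvexHull

variable {N : ℕ} {m : Fin N → Type*} [∀ k, Fintype (m k)]

def unitKetBraTensors (N : ℕ) (m : Fin N → Type*) [∀ k, Fintype (m k)] :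
    Set (Matrix (∀ k, m k) (∀ k, m k) ℂ) :=
  {t | ∃ a b : ∀ k, EuclideanSpace ℂ (m k), (∀ k, ‖a k‖ ≤ 1) ∧ (∀ k, ‖b k‖ ≤ 1) ∧
    t = bigTensor fun k => ketBra (a k) (b k)}

theorem isCompact_unitKetBraTensors : IsCompact (unitKetBraTensors N m) := by
  have hball : IsCompact (Set.univ.pi fun k => Metric.closedBall (0 : EuclideanSpace ℂ (m k)) 1) :=
    isCompact_univ_pi fun k => isCompact_closedBall 0 1
  convert (hball.prod hball).image (f := fun q => bigTensor fun k => ketBra (q.1 k) (q.2 k)) ?_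
  · ext t
    simp [unitKetBraTensors, eq_comm, and_assoc]
  · refine continuous_pi fun x => continuous_pi fun y => ?_
    simp only [bigTensor, ketBra, evec, of_apply, vecMulVec_apply]
    fun_prop

variable [∀ k, DecidableEq (m k)]

theorem inv_smul_mem_convexHull_of_mem_decompositionCosts {t : Matrix (∀ k, m k) (∀ k, m k) ℂ}
    {c : ℝ} (hc : c ∈ decompositionCosts t) (hc₀ : 0 < c) :
    c⁻¹ • t ∈ convexHull ℝ (unitKetBraTensors N m) := by
  obtain ⟨r, u, rfl, rfl⟩ := hc
  choose σ a b hσ₀ hσ_sum ha hb hu using fun i k => exists_sum_smul_ketBra_eq (u i k)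
  let w (q : Fin r × ∀ k, m k) : ℝ := ∏ k, σ q.1 k (q.2 k)
  let z (q : Fin r × ∀ k, m k) := bigTensor fun k => ketBra (a q.1 k (q.2 k)) (b q.1 k (q.2 k))
  have hw_sum : ∑ q, w q = ∑ i, ∏ k, traceNorm (u i k) := by
    simp only [w, Fintype.sum_prod_type, ← Fintype.prod_sum, hσ_sum]
  have hu_sum : ∑ i, bigTensor (u i) = ∑ q, w q • z q := by
    rw [Fintype.sum_prod_type]
    refine Finset.sum_congr rfl fun i _ => ?_
    rw [funext (hu i), bigTensor_sum]
    refine Finset.sum_congr rfl fun p _ => ?_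
    rw [bigTensor_smul, ← Complex.ofReal_prod, Complex.coe_smul]
  rw [hu_sum, ← hw_sum]
  refine Finset.univ.centerMass_mem_convexHull (fun q _ => ?_) (hw_sum ▸ hc₀) (fun q _ => ?_)
  · exact Finset.prod_nonneg fun k _ => hσ₀ _ _ _
  · exact ⟨_, _, fun k => ha _ _ _, fun k => hb _ _ _, rfl⟩

theorem inv_gammaNormN_smul_mem_convexHull {t : Matrix (∀ k, m k) (∀ k, m k) ℂ}
    (hne : (decompositionCosts t).Nonempty) (hγ : 0 < gammaNormN t) :
    (gammaNormN t)⁻¹ • t ∈ convexHull ℝ (unitKetBraTensors N m) := by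
  obtain ⟨c, -, hc_lim, hc_mem⟩ := exists_seq_tendsto_sInf hne (bddBelow_decompositionCosts t)
  refine isCompact_unitKetBraTensors.convexHull.isClosed.mem_of_tendsto
    ((hc_lim.inv₀ hγ.ne').smul_const t) (Filter.Eventually.of_forall fun ν => ?_)
  exact inv_smul_mem_convexHull_of_mem_decompositionCosts (hc_mem ν)
    (hγ.trans_le (csInf_le (bddBelow_decompositionCosts t) (hc_mem ν)))

end ConvexHull

section Separable

variable {N : ℕ} {m : Fin N → Type*} [∀ k, Fintype (m k)]

theorem bigTensor_ketBra_eq_bigTensor_projOnto {a b : ∀ k, EuclideanSpace ℂ (m k)}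
    (ha : ∀ k, ‖a k‖ ≤ 1) (hb : ∀ k, ‖b k‖ ≤ 1) (hab : ∏ k, inner ℂ (b k) (a k) = 1) :
    (∀ k, ‖b k‖ = 1) ∧
      bigTensor (fun k => ketBra (a k) (b k)) = bigTensor (fun k => projOnto (b k)) := by
  have hnorm (k : Fin N) : ‖inner ℂ (b k) (a k)‖ = 1 := by
    have hle (k : Fin N) : ‖inner ℂ (b k) (a k)‖₊ ≤ 1 := norm_inner_le_one (hb k) (ha k)
    have hprod : ∏ k, ‖inner ℂ (b k) (a k)‖₊ = 1 := by rw [← nnnorm_prod, hab, nnnorm_one]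
    exact congrArg NNReal.toReal
      ((Finset.prod_eq_one_iff_of_le_one' fun k _ => hle k).1 hprod k (Finset.mem_univ k))
  choose hb₁ h_ketBra using fun k => ketBra_eq_inner_smul_projOnto (ha k) (hb k) (hnorm k)
  refine ⟨hb₁, ?_⟩
  rw [funext h_ketBra, bigTensor_smul, hab, one_smul]

theorem isSeparableN_of_sum_smul {ι : Type*} [Fintype ι] {ϱ : Matrix (∀ k, m k) (∀ k, m k) ℂ}
    (w : ι → ℝ) (ρ : ι → ∀ k, Matrix (m k) (m k) ℂ) (hw₀ : ∀ i, 0 ≤ w i) (hw₁ : ∑ i, w i = 1)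
    (hρ : ∀ i, w i ≠ 0 → ∀ k, IsDensity (ρ i k)) (hϱ : ϱ = ∑ i, (w i : ℂ) • bigTensor (ρ i)) :
    IsSeparableN ϱ := by
  classical
  let e := (Finset.univ.filter (w · ≠ 0)).equivFin.symm
  have he (j : Fin _) : w (e j) ≠ 0 := (Finset.mem_filter.1 (e j).2).2
  refine ⟨_, fun j => w (e j), fun j => ρ (e j), fun j => (hw₀ _).lt_of_ne' (he j), ?_,
    fun j => hρ _ (he j), ?_⟩
  · rw [Finset.sum_comp_equivFin_filter _ w fun i hi => not_not.1 hi, hw₁]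
  · rw [hϱ, Finset.sum_comp_equivFin_filter _ (fun i => (w i : ℂ) • bigTensor (ρ i))
      fun i hi => by simp [not_not.1 hi]]

theorem isSeparableN_of_mem_convexHull {ϱ : Matrix (∀ k, m k) (∀ k, m k) ℂ}
    (htr : ϱ.trace = 1) (h : ϱ ∈ convexHull ℝ (unitKetBraTensors N m)) : IsSeparableN ϱ := by
  obtain ⟨ι, _, w, z, hw₀, hw₁, hz, rfl⟩ := mem_convexHull_iff_exists_fintype.1 h
  choose a b ha hb hz using hz
  have hinner (i : ι) (hi : w i ≠ 0) : ∏ k, inner ℂ (b i k) (a i k) = 1 := by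
    refine Complex.eq_one_of_sum_mul_eq_one (ζ := fun i => ∏ k, inner ℂ (b i k) (a i k))
      hw₀ hw₁ (fun i => ?_) ?_ hi
    · rw [norm_prod]
      exact Finset.prod_le_one (fun k _ => norm_nonneg _)
        fun k _ => norm_inner_le_one (hb i k) (ha i k)
    · simpa [trace_sum, ← Complex.coe_smul, hz, trace_bigTensor, trace_ketBra] using htr
  choose hb₁ h_proj using fun i hi =>
    bigTensor_ketBra_eq_bigTensor_projOnto (ha i) (hb i) (hinner i hi)
  refine isSeparableN_of_sum_smul w (fun i k => projOnto (b i k)) hw₀ hw₁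
    (fun i hi k => isDensity_projOnto (hb₁ i hi k)) (Finset.sum_congr rfl fun i _ => ?_)
  rcases eq_or_ne (w i) 0 with hi | hi
  · simp [hi]
  · rw [Complex.coe_smul, hz i, h_proj i hi]

end Separable

/-- A density operator on `H₁ ⊗ ⋯ ⊗ Hₙ` is separable iff its n-fold greatest cross
norm equals 1. -/
theorem separableN_iff_gammaNormN_eq_one {N : ℕ} {m : Fin N → Type*}
    [∀ k, Fintype (m k)] [∀ k, DecidableEq (m k)]
    (ϱ : Matrix (∀ k, m k) (∀ k, m k) ℂ) (hϱ : IsDensity ϱ) :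
    IsSeparableN ϱ ↔ gammaNormN ϱ = 1 := by
  refine ⟨gammaNormN_eq_one_of_isSeparableN hϱ.2, fun hγ => ?_⟩
  have hne : (decompositionCosts ϱ).Nonempty := by
    by_contra h
    rw [gammaNormN_eq_sInf_decompositionCosts, Set.not_nonempty_iff_eq_empty.1 h,
      Real.sInf_empty] at hγ
    exact zero_ne_one hγ
  have hϱ_hull := inv_gammaNormN_smul_mem_convexHull hne (hγ ▸ one_pos)
  rw [hγ, inv_one, one_smul] at hϱ_hull
  exact isSeparableN_of_mem_convexHull hϱ.2 hϱ_hull
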